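/- Given invertible power series G, H ∈ R⟨⟨e0,e1⟩⟩ with constant term 1, there exists a unique invertible F with constant term 1 such that F ∘ G = H under the Ihara action, determined recursively by F = G(e0, F e1 F^{-1})^{-1} H. -/
import Mathlib

/-!
Noncommutative formal power series `R⟨⟨e0,e1⟩⟩` are modeled as coefficient
functions on words: `List (Fin 2) → R` (letter `0` is `e0`, letter `1` is
`e1`).  `cmul` is the Cauchy (concatenation) product, `oneS` the unit series.
-/

variable (R : Type*) [CommRing R] [Algebra ℚ R]

/-- Cauchy product of noncommutative power series. -/
noncomputable def cmul (F G : List (Fin 2) → R) : List (Fin 2) → R :=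
  fun w => ∑ i ∈ Finset.range (w.length + 1), F (w.take i) * G (w.drop i)

/-- The unit series `1`. -/
def oneS : List (Fin 2) → R := fun w => if w = [] then 1 else 0

/-- The series consisting of the single monomial `u`. -/
def wordS (u : List (Fin 2)) : List (Fin 2) → R := fun w => if w = u then 1 else 0

/-- Image of the monomial `u` under the substitution `e0 ↦ e0`, `e1 ↦ X`. -/
noncomputable def monImg (X : List (Fin 2) → R) : List (Fin 2) → (List (Fin 2) → R)
  | [] => oneS R
  | a :: u => cmul R (if a = 1 then X else wordS R [0]) (monImg X u)

/-- The finset of words of length ≤ n over the alphabet {e0,e1}. -/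
noncomputable def wordsLe (n : ℕ) : Finset (List (Fin 2)) :=
  (Finset.range (n + 1)).biUnion fun k =>
    (Finset.univ : Finset (Fin k → Fin 2)).image List.ofFn

/-- Substitution `G(e0, X)` of a series `X` for `e1` in `G` (the coefficient
of a word `w` only involves monomials of `G` of length ≤ |w|, since `X` is
substituted only in positions where it contributes at least one letter when
`X` has no constant term, as is the case for `F e1 F⁻¹`). -/
noncomputable def subst (G X : List (Fin 2) → R) : List (Fin 2) → R :=
  fun w => ∑ u ∈ wordsLe w.length, G u * monImg R X u w

/-- `F e1 F⁻¹`, where `Fi` is the inverse of `F`. -/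
noncomputable def conjE1 (F Fi : List (Fin 2) → R) : List (Fin 2) → R :=
  cmul R (cmul R F (wordS R [1])) Fi

/-- The Ihara composition `F ∘ G = G(e0, F e1 F⁻¹) · F`, where `Fi = F⁻¹`. -/
noncomputable def ihara (F Fi G : List (Fin 2) → R) : List (Fin 2) → R :=
  cmul R (subst R G (conjE1 R F Fi)) F


section Aux

variable {R}


lemma cmul_apply (F G : List (Fin 2) → R) (w : List (Fin 2)) :
    cmul R F G w = ∑ i ∈ Finset.range (w.length + 1), F (w.take i) * G (w.drop i) := rfl

lemma cmul_one (F : List (Fin 2) → R) : cmul R F (oneS R) = F := by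
  funext w
  rw [cmul_apply]
  rw [Finset.sum_eq_single_of_mem w.length (Finset.self_mem_range_succ _)]
  · simp [oneS]
  · intro i hi hne
    have hlt : i < w.length := by
      have := Finset.mem_range.mp hi; omega
    have : w.drop i ≠ [] := by
      intro h
      have := congrArg List.length h
      simp at this; omega
    simp [oneS, this]

lemma one_cmul (F : List (Fin 2) → R) : cmul R (oneS R) F = F := by
  funext w
  rw [cmul_apply]
  rw [Finset.sum_eq_single_of_mem 0 (Finset.mem_range.mpr (Nat.succ_pos _))]
  · simp [oneS]
  · intro i hi hne
    have hle : i ≤ w.length := by have := Finset.mem_range.mp hi; omega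
    have : w.take i ≠ [] := by
      intro h
      have := congrArg List.length h
      rw [List.length_take] at this
      simp only [List.length_nil] at this
      omega
    simp [oneS, this]

lemma cmul_assoc (A B C : List (Fin 2) → R) :
    cmul R (cmul R A B) C = cmul R A (cmul R B C) := by
  funext w
  rw [cmul_apply]
  simp only [cmul_apply, Finset.sum_mul, Finset.mul_sum]
  rw [Finset.sum_sigma', Finset.sum_sigma']
  apply Finset.sum_nbij' (i := fun p => (⟨p.2, p.1 - p.2⟩ : Σ _ : ℕ, ℕ))
    (j := fun p => (⟨p.1 + p.2, p.1⟩ : Σ _ : ℕ, ℕ))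
  · rintro ⟨j, i⟩ h
    simp only [Finset.mem_sigma, Finset.mem_range] at h ⊢
    obtain ⟨hj, hi⟩ := h
    rw [List.length_take] at hi
    constructor
    · omega
    · rw [List.length_drop]; omega
  · rintro ⟨i, k⟩ h
    simp only [Finset.mem_sigma, Finset.mem_range] at h ⊢
    obtain ⟨hi, hk⟩ := h
    rw [List.length_drop] at hk
    constructor
    · omega
    · rw [List.length_take]; omega
  · rintro ⟨j, i⟩ h
    simp only [Finset.mem_sigma, Finset.mem_range] at h
    obtain ⟨hj, hi⟩ := h
    rw [List.length_take] at hi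
    have : i + (j - i) = j := by omega
    simp [this]
  · rintro ⟨i, k⟩ h; simp
  · rintro ⟨j, i⟩ h
    simp only [Finset.mem_sigma, Finset.mem_range] at h
    obtain ⟨hj, hi⟩ := h
    rw [List.length_take] at hi
    have hij : i ≤ j := by omega
    have hjw : j ≤ w.length := by omega
    have hji : i + (j - i) = j := by omega
    dsimp only
    rw [List.take_take, min_eq_left hij, List.drop_take, List.drop_drop, hji]
    ring
noncomputable def rinv (F : List (Fin 2) → R) (w : List (Fin 2)) : R :=
  if h : w = [] then 1
  else -∑ i ∈ Finset.range w.length, F (w.take (i + 1)) * rinv F (w.drop (i + 1))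
termination_by w.length
decreasing_by
  have : w.length ≠ 0 := fun hl => h (List.eq_nil_of_length_eq_zero hl)
  rw [List.length_drop]; omega

noncomputable def linv (F : List (Fin 2) → R) (w : List (Fin 2)) : R :=
  if h : w = [] then 1
  else -∑ i ∈ (Finset.range w.length).attach, linv F (w.take i.1) * F (w.drop i.1)
termination_by w.length
decreasing_by
  have hi := Finset.mem_range.mp i.2
  rw [List.length_take]; omega

lemma rinv_nil (F : List (Fin 2) → R) : rinv F [] = 1 := by rw [rinv]; simp

lemma rinv_cons (F : List (Fin 2) → R) (w : List (Fin 2)) (h : w ≠ []) :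
    rinv F w = -∑ i ∈ Finset.range w.length, F (w.take (i + 1)) * rinv F (w.drop (i + 1)) := by
  rw [rinv]; simp [h]

lemma linv_nil (F : List (Fin 2) → R) : linv F [] = 1 := by rw [linv]; simp

lemma linv_cons (F : List (Fin 2) → R) (w : List (Fin 2)) (h : w ≠ []) :
    linv F w = -∑ i ∈ Finset.range w.length, linv F (w.take i) * F (w.drop i) := by
  rw [linv]
  simp only [h, dite_false]
  rw [Finset.sum_attach (Finset.range w.length) (fun i => linv F (w.take i) * F (w.drop i))]

lemma cmul_rinv (F : List (Fin 2) → R) (hF : F [] = 1) : cmul R F (rinv F) = oneS R := by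
  funext w
  rw [cmul_apply, Finset.sum_range_succ']
  by_cases h : w = []
  · subst h; simp [oneS, rinv_nil, hF]
  · have hne : w ≠ [] := h
    rw [List.take_zero, List.drop_zero, hF, one_mul, rinv_cons F w hne]
    simp [oneS, h]

lemma linv_cmul (F : List (Fin 2) → R) (hF : F [] = 1) : cmul R (linv F) F = oneS R := by
  funext w
  rw [cmul_apply, Finset.sum_range_succ]
  by_cases h : w = []
  · subst h; simp [oneS, linv_nil, hF]
  · rw [List.take_length, List.drop_length, hF, mul_one, linv_cons F w h]
    simp [oneS, h]

lemma linv_eq_rinv (F : List (Fin 2) → R) (hF : F [] = 1) : linv F = rinv F := by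
  calc linv F = cmul R (linv F) (oneS R) := (cmul_one _).symm
    _ = cmul R (linv F) (cmul R F (rinv F)) := by rw [cmul_rinv F hF]
    _ = cmul R (cmul R (linv F) F) (rinv F) := (cmul_assoc _ _ _).symm
    _ = cmul R (oneS R) (rinv F) := by rw [linv_cmul F hF]
    _ = rinv F := one_cmul _

lemma rinv_cmul (F : List (Fin 2) → R) (hF : F [] = 1) : cmul R (rinv F) F = oneS R := by
  rw [← linv_eq_rinv F hF]; exact linv_cmul F hF
lemma cmulE1_nil (F : List (Fin 2) → R) : cmul R F (wordS R [1]) [] = 0 := by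
  simp [cmul_apply, wordS]

lemma cmulE1_congr {F F' : List (Fin 2) → R} (m : ℕ)
    (hF : ∀ v : List (Fin 2), v.length < m → F v = F' v)
    (p : List (Fin 2)) (hp : p.length ≤ m) :
    cmul R F (wordS R [1]) p = cmul R F' (wordS R [1]) p := by
  rw [cmul_apply, cmul_apply]
  apply Finset.sum_congr rfl
  intro i hi
  by_cases hd : p.drop i = [1]
  · have hlen : p.length - i = 1 := by
      have := congrArg List.length hd; simpa using this
    have : (p.take i).length < m := by
      rw [List.length_take]; omega
    rw [hF _ this]
  · simp [wordS, hd]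

lemma conjE1_congr {F F' Fi Fi' : List (Fin 2) → R} (m : ℕ)
    (hF : ∀ v : List (Fin 2), v.length < m → F v = F' v)
    (hFi : ∀ v : List (Fin 2), v.length < m → Fi v = Fi' v)
    (v : List (Fin 2)) (hv : v.length ≤ m) :
    conjE1 R F Fi v = conjE1 R F' Fi' v := by
  unfold conjE1
  rw [cmul_apply, cmul_apply]
  apply Finset.sum_congr rfl
  intro j hj
  have hj' : j ≤ v.length := by have := Finset.mem_range.mp hj; omega
  rcases Nat.eq_zero_or_pos j with hj0 | hj0
  · subst hj0; rw [List.take_zero, cmulE1_nil, cmulE1_nil]; simp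
  · have h1 : (v.take j).length ≤ m := by rw [List.length_take]; omega
    have h2 : (v.drop j).length < m := by rw [List.length_drop]; omega
    rw [cmulE1_congr m hF _ h1, hFi _ h2]

lemma monImg_congr {X X' : List (Fin 2) → R} (m : ℕ)
    (h : ∀ v : List (Fin 2), v.length ≤ m → X v = X' v) :
    ∀ (u w : List (Fin 2)), w.length ≤ m → monImg R X u w = monImg R X' u w := by
  intro u
  induction u with
  | nil => intro w _; rfl
  | cons a u ih =>
    intro w hw
    show cmul R _ (monImg R X u) w = cmul R _ (monImg R X' u) w
    rw [cmul_apply, cmul_apply]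
    apply Finset.sum_congr rfl
    intro i hi
    have h1 : (w.take i).length ≤ m := by
      rw [List.length_take]; omega
    have h2 : (w.drop i).length ≤ m := by
      rw [List.length_drop]; omega
    rw [ih _ h2]
    by_cases ha : a = 1
    · simp [ha, h _ h1]
    · simp [ha]

lemma subst_congr {F F' Fi Fi' : List (Fin 2) → R} (G : List (Fin 2) → R) (m : ℕ)
    (hF : ∀ v : List (Fin 2), v.length < m → F v = F' v)
    (hFi : ∀ v : List (Fin 2), v.length < m → Fi v = Fi' v)
    (v : List (Fin 2)) (hv : v.length ≤ m) :
    subst R G (conjE1 R F Fi) v = subst R G (conjE1 R F' Fi') v := by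
  unfold subst
  apply Finset.sum_congr rfl
  intro u _
  rw [monImg_congr m (fun p hp => conjE1_congr m hF hFi p hp) u v hv]

lemma rinv_congr {F F' : List (Fin 2) → R} (m : ℕ)
    (hF : ∀ v : List (Fin 2), v.length < m → F v = F' v) :
    ∀ w : List (Fin 2), w.length < m → rinv F w = rinv F' w := by
  suffices H : ∀ n, ∀ w : List (Fin 2), w.length = n → w.length < m → rinv F w = rinv F' w by
    exact fun w hw => H w.length w rfl hw
  intro n
  induction n using Nat.strong_induction_on with
  | _ n ih =>
    intro w hw hwm
    by_cases h : w = []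
    · subst h; rw [rinv_nil, rinv_nil]
    · rw [rinv_cons F w h, rinv_cons F' w h]
      congr 1
      apply Finset.sum_congr rfl
      intro i hi
      have hi' : i < w.length := Finset.mem_range.mp hi
      have h1 : (w.take (i + 1)).length < m := by rw [List.length_take]; omega
      have h2 : (w.drop (i + 1)).length < n := by rw [List.length_drop]; omega
      have h2m : (w.drop (i + 1)).length < m := by rw [List.length_drop]; omega
      rw [hF _ h1, ih _ h2 _ rfl h2m]

lemma wordsLe_zero : wordsLe 0 = {([] : List (Fin 2))} := by
  ext u
  simp only [wordsLe, Finset.mem_biUnion, Finset.mem_range, Finset.mem_image,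
    Finset.mem_univ, true_and, Finset.mem_singleton]
  constructor
  · rintro ⟨k, hk, f, hf⟩
    have hk0 : k = 0 := by omega
    subst hk0
    simpa using hf.symm
  · rintro rfl
    exact ⟨0, by omega, Fin.elim0, by simp⟩

lemma monImg_nil (X : List (Fin 2) → R) : monImg R X [] = oneS R := rfl

lemma subst_nil (G X : List (Fin 2) → R) : subst R G X [] = G [] := by
  unfold subst
  rw [show ([] : List (Fin 2)).length = 0 from rfl, wordsLe_zero, Finset.sum_singleton,
    monImg_nil]
  simp [oneS]
noncomputable def phiF (G H F : List (Fin 2) → R) : List (Fin 2) → R :=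
  fun w => H w - ∑ i ∈ Finset.range w.length,
    subst R G (conjE1 R F (rinv F)) (w.take (i + 1)) * F (w.drop (i + 1))

lemma phiF_nil (G H F : List (Fin 2) → R) : phiF G H F [] = H [] := by simp [phiF]

lemma phiF_congr {G H F F' : List (Fin 2) → R} (m : ℕ)
    (h : ∀ v : List (Fin 2), v.length < m → F v = F' v)
    (w : List (Fin 2)) (hw : w.length ≤ m) : phiF G H F w = phiF G H F' w := by
  unfold phiF
  congr 1
  apply Finset.sum_congr rfl
  intro i hi
  have hi' : i < w.length := Finset.mem_range.mp hi
  have h1 : (w.take (i + 1)).length ≤ m := by rw [List.length_take]; omega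
  have h2 : (w.drop (i + 1)).length < m := by rw [List.length_drop]; omega
  rw [subst_congr G m h (rinv_congr m h) _ h1, h _ h2]

noncomputable def seqF (G H : List (Fin 2) → R) : ℕ → (List (Fin 2) → R)
  | 0 => phiF G H (fun _ => 0)
  | n + 1 => phiF G H (seqF G H n)

lemma seqF_succ_agree (G H : List (Fin 2) → R) :
    ∀ n, ∀ w : List (Fin 2), w.length ≤ n → seqF G H n w = seqF G H (n + 1) w := by
  intro n
  induction n with
  | zero =>
    intro w hw
    have hnil : w = [] := List.eq_nil_of_length_eq_zero (by omega)
    subst hnil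
    rw [show seqF G H 1 = phiF G H (seqF G H 0) from rfl,
      show seqF G H 0 = phiF G H (fun _ => 0) from rfl, phiF_nil, phiF_nil]
  | succ n ih =>
    intro w hw
    show phiF G H (seqF G H n) w = phiF G H (seqF G H (n + 1)) w
    exact phiF_congr (n + 1) (fun v hv => ih v (by omega)) w hw

lemma seqF_agree (G H : List (Fin 2) → R) (m n : ℕ) (hmn : m ≤ n) (w : List (Fin 2))
    (hw : w.length ≤ m) : seqF G H m w = seqF G H n w := by
  induction n, hmn using Nat.le_induction with
  | base => rfl
  | succ n hmn ih => rw [ih, seqF_succ_agree G H n w (le_trans hw hmn)]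

noncomputable def Fsol (G H : List (Fin 2) → R) : List (Fin 2) → R :=
  fun w => seqF G H w.length w

lemma Fsol_eq_seq (G H : List (Fin 2) → R) (n : ℕ) (w : List (Fin 2)) (hw : w.length ≤ n) :
    Fsol G H w = seqF G H n w := seqF_agree G H w.length n hw w le_rfl

lemma Fsol_fixed (G H : List (Fin 2) → R) (w : List (Fin 2)) :
    Fsol G H w = phiF G H (Fsol G H) w := by
  have h1 : ∀ v : List (Fin 2), v.length < w.length → Fsol G H v = seqF G H w.length v :=
    fun v hv => Fsol_eq_seq G H w.length v (le_of_lt hv)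
  rw [phiF_congr w.length h1 w le_rfl]
  show Fsol G H w = seqF G H (w.length + 1) w
  exact seqF_succ_agree G H w.length w le_rfl

lemma Fsol_nil (G H : List (Fin 2) → R) : Fsol G H [] = H [] := by
  rw [Fsol_fixed, phiF_nil]

lemma ihara_Fsol (G H : List (Fin 2) → R) (hG1 : G [] = 1) :
    ihara R (Fsol G H) (rinv (Fsol G H)) G = H := by
  funext w
  unfold ihara
  rw [cmul_apply, Finset.sum_range_succ', List.take_zero, List.drop_zero, subst_nil,
    hG1, one_mul]
  have hfix := Fsol_fixed G H w
  unfold phiF at hfix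
  linear_combination hfix

lemma solution_unique (G H : List (Fin 2) → R) (hG1 : G [] = 1)
    {F Fi F' Fi' : List (Fin 2) → R}
    (h1 : F [] = 1) (hFi : cmul R F Fi = oneS R) (hE : ihara R F Fi G = H)
    (h1' : F' [] = 1) (hFi' : cmul R F' Fi' = oneS R) (hE' : ihara R F' Fi' G = H) :
    F = F' := by
  suffices HH : ∀ n, ∀ w : List (Fin 2), w.length = n → F w = F' w ∧ Fi w = Fi' w by
    funext w; exact (HH w.length w rfl).1
  intro n
  induction n using Nat.strong_induction_on with
  | _ n ih =>
    intro w hw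
    have ihF : ∀ v : List (Fin 2), v.length < n → F v = F' v :=
      fun v hv => (ih _ hv v rfl).1
    have ihFi : ∀ v : List (Fin 2), v.length < n → Fi v = Fi' v :=
      fun v hv => (ih _ hv v rfl).2
    have hFw : F w = F' w := by
      have e1 := congrFun hE w
      have e2 := congrFun hE' w
      unfold ihara at e1 e2
      rw [cmul_apply, Finset.sum_range_succ', List.take_zero, List.drop_zero, subst_nil,
        hG1, one_mul] at e1 e2
      have hs : ∑ i ∈ Finset.range w.length,
            subst R G (conjE1 R F Fi) (w.take (i + 1)) * F (w.drop (i + 1))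
          = ∑ i ∈ Finset.range w.length,
            subst R G (conjE1 R F' Fi') (w.take (i + 1)) * F' (w.drop (i + 1)) := by
        apply Finset.sum_congr rfl
        intro i hi
        have hi' := Finset.mem_range.mp hi
        have l1 : (w.take (i + 1)).length ≤ n := by rw [List.length_take]; omega
        have l2 : (w.drop (i + 1)).length < n := by rw [List.length_drop]; omega
        rw [subst_congr G n ihF ihFi _ l1, ihF _ l2]
      linear_combination e1 - e2 - hs
    refine ⟨hFw, ?_⟩
    rcases Nat.eq_zero_or_pos n with h0 | hpos
    · have hwn : w = [] := List.eq_nil_of_length_eq_zero (by omega)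
      subst hwn
      have c1 := congrFun hFi []
      have c2 := congrFun hFi' []
      simp only [cmul_apply, List.length_nil, zero_add, Finset.sum_range_one,
        List.take_nil, List.drop_nil, oneS, if_pos rfl, h1, h1', one_mul] at c1 c2
      rw [c1, c2]
    · have hwne : w ≠ [] := by
        intro h; rw [h] at hw; simp at hw; omega
      have c1 := congrFun hFi w
      have c2 := congrFun hFi' w
      rw [cmul_apply, Finset.sum_range_succ', List.take_zero, List.drop_zero, h1,
        one_mul] at c1
      rw [cmul_apply, Finset.sum_range_succ', List.take_zero, List.drop_zero, h1',
        one_mul] at c2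
      have hs : ∑ i ∈ Finset.range w.length, F (w.take (i + 1)) * Fi (w.drop (i + 1))
          = ∑ i ∈ Finset.range w.length, F' (w.take (i + 1)) * Fi' (w.drop (i + 1)) := by
        apply Finset.sum_congr rfl
        intro i hi
        have hi' := Finset.mem_range.mp hi
        have l2 : (w.drop (i + 1)).length < n := by rw [List.length_drop]; omega
        rw [ihFi _ l2]
        rcases Nat.lt_or_ge (i + 1) n with hl | hg
        · rw [ihF _ (by rw [List.length_take]; omega)]
        · have : i + 1 = n := by omega
          have htw : w.take (i + 1) = w := List.take_of_length_le (by omega)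
          rw [htw, hFw]
      linear_combination c1 - c2 - hs
end Aux

/-- Given invertible `G, H` with constant term 1, there is a unique invertible
series `F` with constant term 1 such that `F ∘ G = H` for the Ihara action
(`F` is determined recursively by `F = G(e0, F e1 F⁻¹)⁻¹ H`). -/
theorem ihara_exists_unique (G H : List (Fin 2) → R)
    (hG1 : G [] = 1) (hH1 : H [] = 1)
    (hG : ∃ Gi, cmul R G Gi = oneS R ∧ cmul R Gi G = oneS R)
    (hH : ∃ Hi, cmul R H Hi = oneS R ∧ cmul R Hi H = oneS R) :
    ∃! F : List (Fin 2) → R, F [] = 1 ∧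
      ∃ Fi, cmul R F Fi = oneS R ∧ cmul R Fi F = oneS R ∧
        ihara R F Fi G = H := by
  have hF1 : Fsol G H [] = 1 := by rw [Fsol_nil]; exact hH1
  refine ⟨Fsol G H, ⟨hF1, rinv (Fsol G H), cmul_rinv _ hF1, rinv_cmul _ hF1,
    ihara_Fsol G H hG1⟩, ?_⟩
  rintro F' ⟨h1', Fi', hr', _, hE'⟩
  exact solution_unique G H hG1 h1' hr' hE' hF1 (cmul_rinv _ hF1) (ihara_Fsol G H hG1)
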